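/- arXiv:1306.3525 — 5 statements merged into one kernel-verified Lean document; each statement's English description precedes it below -/
import Mathlib

section
/- Let $R_1,\dots,R_n \ge 0$ and $T_1,\dots,T_n \ge 0$ be reals with $\sum_i T_i \le B$ for some $B > 0$. Then $\sum_{i=1}^n \max\{0,\, 1 - (\sum_{j<i} T_j)/B\} \cdot R_i \ge \sum_{i=1}^n (1 - (\sum_{j<i} T_j)/B) \cdot R_i$, and if additionally the sequence $R_i/T_i$ is non-increasing (with $T_i > 0$), then $\sum_{i=1}^n (1 - (\sum_{j<i} T_j)/B) R_i \ge \frac{1}{2}\sum_{i=1}^n R_i$. -/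
/-!
Write `S i = ∑ j < i, T j` for the start time of arm `i`. The loss caused by starting late is
`∑ R i * S i / B`, and the ordering by reward rate bounds it: for `j < i` we have
`R i * T j ≤ R j * T i`, so twice the "lower triangle" `∑_{j < i} R i * T j` is at most the full
square `(∑ R) * (∑ T) ≤ (∑ R) * B`. Hence at most half of the total reward is lost.
-/

open Finset

section TriangleBound

variable {α : Type*} [CommRing α] [LinearOrder α] [IsStrictOrderedRing α]

theorem two_mul_sum_mul_partial_sum_le {R T : ℕ → α} (hR : ∀ i, 0 ≤ R i) (hT : ∀ i, 0 ≤ T i)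
    (hmono : ∀ i j, i ≤ j → R j * T i ≤ R i * T j) (n : ℕ) :
    2 * ∑ i ∈ range n, R i * ∑ j ∈ range i, T j ≤
      (∑ i ∈ range n, R i) * ∑ i ∈ range n, T i := by
  induction n with
  | zero => simp
  | succ n ih =>
    have hlast : R n * ∑ j ∈ range n, T j ≤ (∑ j ∈ range n, R j) * T n := by
      rw [mul_sum, sum_mul]
      exact sum_le_sum fun j hj => hmono j n (mem_range.mp hj).le
    have hdiag : 0 ≤ R n * T n := mul_nonneg (hR n) (hT n)
    simp only [sum_range_succ]
    linear_combination ih + hlast + hdiag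

end TriangleBound

theorem stmt_0_general (n : ℕ) (R T : ℕ → ℝ) (B : ℝ) (hB : 0 < B)
    (hR : ∀ i, 0 ≤ R i)
    (hsum : ∑ i ∈ range n, T i ≤ B) :
    (∑ i ∈ range n, max 0 (1 - (∑ j ∈ range i, T j) / B) * R i ≥
      ∑ i ∈ range n, (1 - (∑ j ∈ range i, T j) / B) * R i) ∧
    ((∀ i, 0 < T i) → (∀ i j, i ≤ j → R j * T i ≤ R i * T j) →
      ∑ i ∈ range n, (1 - (∑ j ∈ range i, T j) / B) * R i ≥
        (1 / 2) * ∑ i ∈ range n, R i) := by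
  refine ⟨sum_le_sum fun i _ => mul_le_mul_of_nonneg_right (le_max_right _ _) (hR i), ?_⟩
  intro hT hmono
  have htriangle := two_mul_sum_mul_partial_sum_le hR (fun i => (hT i).le) hmono n
  have hsquare : (∑ i ∈ range n, R i) * ∑ i ∈ range n, T i ≤ (∑ i ∈ range n, R i) * B :=
    mul_le_mul_of_nonneg_left hsum (sum_nonneg fun i _ => hR i)
  have hloss : ∑ i ∈ range n, (1 - (∑ j ∈ range i, T j) / B) * R i =
      ∑ i ∈ range n, R i - (∑ i ∈ range n, R i * ∑ j ∈ range i, T j) / B := by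
    rw [sum_div, ← sum_sub_distrib]
    refine sum_congr rfl fun i _ => ?_
    field_simp
  rw [hloss, ge_iff_le, le_sub_iff_add_le, ← le_sub_iff_add_le', div_le_iff₀ hB]
  linarith

theorem stmt_0 (n : ℕ) (R T : ℕ → ℝ) (B : ℝ) (hB : 0 < B)
    (hR : ∀ i, 0 ≤ R i) (hT : ∀ i, 0 ≤ T i)
    (hsum : ∑ i ∈ range n, T i ≤ B) :
    (∑ i ∈ range n, max 0 (1 - (∑ j ∈ range i, T j) / B) * R i ≥
      ∑ i ∈ range n, (1 - (∑ j ∈ range i, T j) / B) * R i) ∧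
    ((∀ i, 0 < T i) → (∀ i j, i ≤ j → R j * T i ≤ R i * T j) →
      ∑ i ∈ range n, (1 - (∑ j ∈ range i, T j) / B) * R i ≥
        (1 / 2) * ∑ i ∈ range n, R i) :=
  stmt_0_general n R T B hB hR hsum
end

section
/- Let $R_1,\dots,R_n \ge 0$ and $T_1,\dots,T_n \ge 0$ with $\sum_i T_i \le B/c$ for some $B>0$ and $c \ge 1$, and suppose $R_1/T_1 \ge R_2/T_2 \ge \cdots \ge R_n/T_n$ (all $T_i>0$). Then $\sum_{i=1}^n (1 - (\sum_{j<i} T_j)/B) R_i \ge (1 - \frac{1}{2c}) \sum_{i=1}^n R_i$. -/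
/-! Write `P i = ∑ j < i, T j` for the time elapsed before arm `i`. The left-hand side is
`∑ R - (∑ P i * R i) / B`. The ordering gives `T j * R i ≤ R j * T i` for `j < i`, so the
sum `∑ P i * R i` over pairs `j < i` is at most half of `(∑ T) * (∑ R) ≤ (B / c) * ∑ R`. -/

open Finset

section PrefixSums

variable {α : Type*} [CommRing α] [LinearOrder α] [IsStrictOrderedRing α] {R T : ℕ → α}

lemma sum_range_mul_le_mul_sum_range (horder : ∀ i j, i ≤ j → R j * T i ≤ R i * T j) (n : ℕ) :
    (∑ j ∈ range n, T j) * R n ≤ T n * ∑ j ∈ range n, R j := by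
  rw [sum_mul, mul_sum]
  refine sum_le_sum fun j hj => ?_
  linarith [horder j n (mem_range.mp hj).le]

lemma two_mul_sum_prefix_mul_add_sum_mul_le (horder : ∀ i j, i ≤ j → R j * T i ≤ R i * T j)
    (n : ℕ) :
    2 * ∑ i ∈ range n, (∑ j ∈ range i, T j) * R i + ∑ i ∈ range n, T i * R i ≤
      (∑ i ∈ range n, T i) * ∑ i ∈ range n, R i := by
  induction n with
  | zero => simp
  | succ n ih =>
    simp only [sum_range_succ]
    linarith [sum_range_mul_le_mul_sum_range horder n]

end PrefixSums

theorem stmt_1 (n : ℕ) (R T : ℕ → ℝ) (B c : ℝ) (hB : 0 < B) (hc : 1 ≤ c)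
    (hR : ∀ i, 0 ≤ R i) (hT : ∀ i, 0 < T i)
    (horder : ∀ i j, i ≤ j → R j * T i ≤ R i * T j)
    (hsum : ∑ i ∈ range n, T i ≤ B / c) :
    ∑ i ∈ range n, (1 - (∑ j ∈ range i, T j) / B) * R i ≥
      (1 - 1 / (2 * c)) * ∑ i ∈ range n, R i := by
  set S := ∑ i ∈ range n, R i
  set A := ∑ i ∈ range n, (∑ j ∈ range i, T j) * R i
  have hS : 0 ≤ S := sum_nonneg fun i _ => hR i
  have hdiag : 0 ≤ ∑ i ∈ range n, T i * R i :=
    sum_nonneg fun i _ => mul_nonneg (hT i).le (hR i)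
  have hA : 2 * A ≤ B / c * S := by
    linarith [two_mul_sum_prefix_mul_add_sum_mul_le horder n, mul_le_mul_of_nonneg_right hsum hS]
  have hsplit : ∑ i ∈ range n, (1 - (∑ j ∈ range i, T j) / B) * R i = S - A / B := by
    rw [sum_div (range n), ← sum_sub_distrib]
    refine sum_congr rfl fun i _ => ?_
    ring
  have hAB : A / B ≤ 1 / (2 * c) * S := by
    have hc0 : 0 < c := by linarith
    rw [div_le_iff₀ hB]
    calc A ≤ B / c * S / 2 := by linarith
      _ = 1 / (2 * c) * S * B := by field_simp
  rw [hsplit]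
  linarith
end

section
/- Let $f^-, f^+, g^-, g^+, \lambda^-, \lambda^+ \ge 0$ with $\lambda^- \le \lambda^+$, and suppose $\lambda^- C + (f^- - \lambda^- g^-) \ge V$ and $\lambda^+ C + (f^+ - \lambda^+ g^+) \ge V$ where $g^- > C \ge g^+$ and $C > 0$. Let $a \in [0,1]$ be the unique value with $a g^- + (1-a) g^+ = C$. Then $a f^- + (1-a) f^+ \ge V - (1-a)(\lambda^+ - \lambda^-)(C - g^+) \ge V - (\lambda^+ - \lambda^-) C$. -/
/-!
Averaging the two Lagrangian bounds with weights `a` and `1 - a` gives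
`a f⁻ + (1 - a) f⁺ ≥ V + λ⁻ a (g⁻ - C) - λ⁺ (1 - a) (C - g⁺)`. Because the combination meets the
budget exactly, the overshoot `a (g⁻ - C)` equals the undershoot `(1 - a) (C - g⁺)`, so only the
gap `λ⁺ - λ⁻` times that amount is lost; and it is at most `C` since `0 ≤ g⁺ ≤ C`.
-/

lemma convex_comb_ge_of_lagrangian_bounds {f₁ f₂ g₁ g₂ l₁ l₂ C V a : ℝ}
    (h₁ : l₁ * C + (f₁ - l₁ * g₁) ≥ V) (h₂ : l₂ * C + (f₂ - l₂ * g₂) ≥ V)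
    (ha₀ : 0 ≤ a) (ha₁ : a ≤ 1) (hbudget : a * g₁ + (1 - a) * g₂ = C) :
    a * f₁ + (1 - a) * f₂ ≥ V - (1 - a) * (l₂ - l₁) * (C - g₂) := by
  have hbalance : a * (g₁ - C) = (1 - a) * (C - g₂) := by linear_combination hbudget
  have hf₁ : V - l₁ * (C - g₁) ≤ f₁ := by linarith
  have hf₂ : V - l₂ * (C - g₂) ≤ f₂ := by linarith
  have ha₁' : 0 ≤ 1 - a := sub_nonneg.2 ha₁
  calc V - (1 - a) * (l₂ - l₁) * (C - g₂)
      = a * (V - l₁ * (C - g₁)) + (1 - a) * (V - l₂ * (C - g₂)) := by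
        linear_combination -l₁ * hbalance
    _ ≤ a * f₁ + (1 - a) * f₂ := by gcongr

lemma one_sub_mul_mul_sub_le {l₁ l₂ g C a : ℝ} (ha : 0 ≤ a) (hl : l₁ ≤ l₂) (hg : 0 ≤ g)
    (hgC : g ≤ C) : (1 - a) * (l₂ - l₁) * (C - g) ≤ (l₂ - l₁) * C := by
  have hshare : (1 - a) * (C - g) ≤ C :=
    calc (1 - a) * (C - g) ≤ C - g := mul_le_of_le_one_left (sub_nonneg.2 hgC) (by linarith)
      _ ≤ C := by linarith
  have hl' : 0 ≤ l₂ - l₁ := sub_nonneg.2 hl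
  calc (1 - a) * (l₂ - l₁) * (C - g) = (l₂ - l₁) * ((1 - a) * (C - g)) := by ring
    _ ≤ (l₂ - l₁) * C := by gcongr

theorem stmt_7_general (fm fp gm gp lm lp C V a : ℝ)
    (hgp : 0 ≤ gp)
    (hll : lm ≤ lp)
    (h1 : lm * C + (fm - lm * gm) ≥ V)
    (h2 : lp * C + (fp - lp * gp) ≥ V)
    (hgC : gp ≤ C)
    (ha0 : 0 ≤ a) (ha1 : a ≤ 1)
    (haeq : a * gm + (1 - a) * gp = C) :
    a * fm + (1 - a) * fp ≥ V - (1 - a) * (lp - lm) * (C - gp) ∧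
    V - (1 - a) * (lp - lm) * (C - gp) ≥ V - (lp - lm) * C :=
  ⟨convex_comb_ge_of_lagrangian_bounds h1 h2 ha0 ha1 haeq,
    sub_le_sub_left (one_sub_mul_mul_sub_le ha0 hll hgp hgC) V⟩

theorem stmt_7 (fm fp gm gp lm lp C V a : ℝ)
    (hfm : 0 ≤ fm) (hfp : 0 ≤ fp) (hgm : 0 ≤ gm) (hgp : 0 ≤ gp)
    (hlm : 0 ≤ lm) (hlp : 0 ≤ lp) (hll : lm ≤ lp)
    (h1 : lm * C + (fm - lm * gm) ≥ V)
    (h2 : lp * C + (fp - lp * gp) ≥ V)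
    (hgC : gp ≤ C) (hCg : C < gm) (hC : 0 < C)
    (ha0 : 0 ≤ a) (ha1 : a ≤ 1)
    (haeq : a * gm + (1 - a) * gp = C) :
    a * fm + (1 - a) * fp ≥ V - (1 - a) * (lp - lm) * (C - gp) ∧
    V - (1 - a) * (lp - lm) * (C - gp) ≥ V - (lp - lm) * C :=
  stmt_7_general fm fp gm gp lm lp C V a hgp hll h1 h2 hgC ha0 ha1 haeq
end

section
/- In the setting of the previous statement, if additionally $\lambda^+ - \lambda^- \le \epsilon V / (2C)$ for some $\epsilon \in (0,1]$, then $a f^- + (1-a) f^+ \ge V(1 - \epsilon/2) \ge V/(1+\epsilon)$. -/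
/-!
Both Lagrangian bounds are weighted by the mixing coefficient `a`. Since the mixture meets the
budget exactly, the budget overshoot `a (g⁻ - C)` of the first collection equals the slack
`(1 - a) (C - g⁺)` of the second, which is at most `C`; so the mixture loses at most
`(λ⁺ - λ⁻) C ≤ ε V / 2` against `V`. Finally `1 - ε/2 ≥ 1/(1 + ε)` on `[0, 1]`.
-/

lemma inv_one_add_le_one_sub_half {x : ℝ} (hx0 : 0 ≤ x) (hx1 : x ≤ 1) :
    (1 + x)⁻¹ ≤ 1 - x / 2 := by
  rw [inv_le_iff_one_le_mul₀ (by linarith)]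
  nlinarith [mul_nonneg hx0 (sub_nonneg.2 hx1)]

lemma mix_ge_sub_gap_mul_budget {fm fp gm gp lm lp C V a : ℝ} (hgp : 0 ≤ gp) (hll : lm ≤ lp)
    (h1 : lm * C + (fm - lm * gm) ≥ V) (h2 : lp * C + (fp - lp * gp) ≥ V)
    (hgC : gp ≤ C) (ha0 : 0 ≤ a) (ha1 : a ≤ 1) (haeq : a * gm + (1 - a) * gp = C) :
    V - (lp - lm) * C ≤ a * fm + (1 - a) * fp := by
  have hm : a * (V + lm * (gm - C)) ≤ a * fm := mul_le_mul_of_nonneg_left (by linarith) ha0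
  have hp : (1 - a) * (V - lp * (C - gp)) ≤ (1 - a) * fp :=
    mul_le_mul_of_nonneg_left (by linarith) (by linarith)
  have hslack : (1 - a) * (C - gp) ≤ C := by nlinarith [mul_nonneg ha0 (sub_nonneg.2 hgC)]
  have hloss := mul_le_mul_of_nonneg_left hslack (sub_nonneg.2 hll)
  linear_combination hm + hp + hloss - lm * haeq

theorem stmt_8_general (fm fp gm gp lm lp C V a ε : ℝ)
    (hgp : 0 ≤ gp)
    (hll : lm ≤ lp)
    (h1 : lm * C + (fm - lm * gm) ≥ V)
    (h2 : lp * C + (fp - lp * gp) ≥ V)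
    (hgC : gp ≤ C) (hC : 0 < C)
    (ha0 : 0 ≤ a) (ha1 : a ≤ 1)
    (haeq : a * gm + (1 - a) * gp = C)
    (hV : 0 ≤ V)
    (hε0 : 0 < ε) (hε1 : ε ≤ 1)
    (hgap : lp - lm ≤ ε * V / (2 * C)) :
    a * fm + (1 - a) * fp ≥ V * (1 - ε / 2) ∧ V * (1 - ε / 2) ≥ V / (1 + ε) := by
  have hloss : (lp - lm) * (2 * C) ≤ ε * V := (le_div_iff₀ (by positivity)).1 hgap
  have hmix := mix_ge_sub_gap_mul_budget hgp hll h1 h2 hgC ha0 ha1 haeq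
  refine ⟨by linarith, ?_⟩
  rw [ge_iff_le, div_eq_mul_inv]
  exact mul_le_mul_of_nonneg_left (inv_one_add_le_one_sub_half hε0.le hε1) hV

theorem stmt_8 (fm fp gm gp lm lp C V a ε : ℝ)
    (hfm : 0 ≤ fm) (hfp : 0 ≤ fp) (hgm : 0 ≤ gm) (hgp : 0 ≤ gp)
    (hlm : 0 ≤ lm) (hlp : 0 ≤ lp) (hll : lm ≤ lp)
    (h1 : lm * C + (fm - lm * gm) ≥ V)
    (h2 : lp * C + (fp - lp * gp) ≥ V)
    (hgC : gp ≤ C) (hCg : C < gm) (hC : 0 < C)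
    (ha0 : 0 ≤ a) (ha1 : a ≤ 1)
    (haeq : a * gm + (1 - a) * gp = C)
    (hV : 0 ≤ V)
    (hε0 : 0 < ε) (hε1 : ε ≤ 1)
    (hgap : lp - lm ≤ ε * V / (2 * C)) :
    a * fm + (1 - a) * fp ≥ V * (1 - ε / 2) ∧ V * (1 - ε / 2) ≥ V / (1 + ε) :=
  stmt_8_general fm fp gm gp lm lp C V a ε hgp hll h1 h2 hgC hC ha0 ha1 haeq hV hε0 hε1 hgap
end

section
/- Let $\gamma \in [0,1)$, let $B > 0$, and let $R_1,\dots,R_n, T_1,\dots,T_n \ge 0$ satisfy $\sum_i T_i \le (1-\gamma) B$ and $R_1/T_1 \ge \cdots \ge R_n/T_n$ (all $T_i > 0$). Then $(1-\gamma) \sum_{i=1}^n \left(1 - \frac{\sum_{j<i} T_j}{(1-\gamma)B}\right) R_i \ge \frac{1-\gamma}{2} \sum_i R_i$. -/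
/-!
Write `C = (1 - γ) B`. After expanding, the claim is `2 ∑ᵢ (∑_{j<i} Tⱼ) Rᵢ ≤ C ∑ᵢ Rᵢ`.
Because the ratios `Rᵢ / Tᵢ` decrease, the term `Rₙ ∑_{j<n} Tⱼ` added at step `n` is at most
`Tₙ ∑_{j<n} Rⱼ`, so by induction twice the prefix-weighted sum is at most `(∑ T)(∑ R)`,
which is at most `C ∑ R`.
-/

open Finset

theorem two_mul_sum_prefix_mul_le_sum_mul_sum (n : ℕ) (R T : ℕ → ℝ) (hR : ∀ i, 0 ≤ R i)
    (hT : ∀ i, 0 ≤ T i) (horder : ∀ i j, i ≤ j → R j * T i ≤ R i * T j) :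
    2 * ∑ i ∈ range n, (∑ j ∈ range i, T j) * R i ≤
      (∑ i ∈ range n, T i) * ∑ i ∈ range n, R i := by
  induction n with
  | zero => simp
  | succ n ih =>
    have hlast : (∑ j ∈ range n, T j) * R n ≤ T n * ∑ j ∈ range n, R j := by
      rw [sum_mul, mul_sum]
      exact sum_le_sum fun j hj => by linarith [horder j n (mem_range.mp hj).le]
    simp only [sum_range_succ]
    nlinarith [mul_nonneg (hT n) (hR n)]

theorem sum_one_sub_prefix_div_mul_ge (n : ℕ) (C : ℝ) (hC : 0 < C) (R T : ℕ → ℝ)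
    (hR : ∀ i, 0 ≤ R i) (hT : ∀ i, 0 ≤ T i) (horder : ∀ i j, i ≤ j → R j * T i ≤ R i * T j)
    (hsum : ∑ i ∈ range n, T i ≤ C) :
    (∑ i ∈ range n, R i) / 2 ≤ ∑ i ∈ range n, (1 - (∑ j ∈ range i, T j) / C) * R i := by
  have hcharge : 2 * ∑ i ∈ range n, (∑ j ∈ range i, T j) * R i ≤ C * ∑ i ∈ range n, R i :=
    (two_mul_sum_prefix_mul_le_sum_mul_sum n R T hR hT horder).trans
      (mul_le_mul_of_nonneg_right hsum (sum_nonneg fun i _ => hR i))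
  have hexpand : ∑ i ∈ range n, (1 - (∑ j ∈ range i, T j) / C) * R i =
      ∑ i ∈ range n, R i - (∑ i ∈ range n, (∑ j ∈ range i, T j) * R i) / C := by
    rw [sum_div, ← sum_sub_distrib]
    exact sum_congr rfl fun i _ => by ring
  rw [hexpand]
  have hpenalty : (∑ i ∈ range n, (∑ j ∈ range i, T j) * R i) / C ≤ (∑ i ∈ range n, R i) / 2 := by
    rw [div_le_iff₀ hC]
    linarith
  linarith

theorem stmt_10_general (n : ℕ) (γ B : ℝ) (hγ1 : γ < 1) (hB : 0 < B)
    (R T : ℕ → ℝ) (hR : ∀ i, 0 ≤ R i) (hT : ∀ i, 0 < T i)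
    (horder : ∀ i j, i ≤ j → R j * T i ≤ R i * T j)
    (hsum : ∑ i ∈ range n, T i ≤ (1 - γ) * B) :
    (1 - γ) * ∑ i ∈ range n, (1 - (∑ j ∈ range i, T j) / ((1 - γ) * B)) * R i ≥
      (1 - γ) / 2 * ∑ i ∈ range n, R i := by
  have hγ : 0 < 1 - γ := sub_pos.mpr hγ1
  have half := sum_one_sub_prefix_div_mul_ge n ((1 - γ) * B) (mul_pos hγ hB) R T hR
    (fun i => (hT i).le) horder hsum
  calc (1 - γ) / 2 * ∑ i ∈ range n, R i = (1 - γ) * ((∑ i ∈ range n, R i) / 2) := by ring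
    _ ≤ _ := mul_le_mul_of_nonneg_left half hγ.le

theorem stmt_10 (n : ℕ) (γ B : ℝ) (hγ0 : 0 ≤ γ) (hγ1 : γ < 1) (hB : 0 < B)
    (R T : ℕ → ℝ) (hR : ∀ i, 0 ≤ R i) (hT : ∀ i, 0 < T i)
    (horder : ∀ i j, i ≤ j → R j * T i ≤ R i * T j)
    (hsum : ∑ i ∈ range n, T i ≤ (1 - γ) * B) :
    (1 - γ) * ∑ i ∈ range n, (1 - (∑ j ∈ range i, T j) / ((1 - γ) * B)) * R i ≥
      (1 - γ) / 2 * ∑ i ∈ range n, R i :=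
  stmt_10_general n γ B hγ1 hB R T hR hT horder hsum
end
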